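/- arXiv:1906.09780 — 2 statements merged into one kernel-verified Lean document; each statement's English description precedes it below -/
import Mathlib

section
/- For every prime power q, B_q(13, 5, 4; 4) ≥ (q^3 + 1)(q^9 + q^7 + q^5 + q^3). -/
/-- The subspace distance between two subspaces:
`d_s(U,W) = dim(U+W) - dim(U∩W)`. -/
noncomputable def subspaceDist {F V : Type*} [Field F] [AddCommGroup V] [Module F V]
    (U W : Submodule F V) : ℕ :=
  Module.finrank F ↥(U ⊔ W) - Module.finrank F ↥(U ⊓ W)

/-- `C` is a constant dimension code of `k`-spaces in `F^v` with minimum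
subspace distance at least `d`. -/
def IsCDCode (F : Type*) [Field F] (v k d : ℕ)
    (C : Finset (Submodule F (Fin v → F))) : Prop :=
  (∀ U ∈ C, Module.finrank F ↥U = k) ∧
  (∀ U ∈ C, ∀ U' ∈ C, U ≠ U' → d ≤ subspaceDist U U')

/-- `A_q(v,d;k)`: the maximum cardinality of a constant dimension code of
`k`-spaces in `F^v` with minimum subspace distance at least `d`. -/
noncomputable def Aq (F : Type*) [Field F] (v d k : ℕ) : ℕ :=
  sSup {n | ∃ C : Finset (Submodule F (Fin v → F)), C.card = n ∧ IsCDCode F v k d C}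

/-- `B_q(v1,v2,d;k)`: the maximum cardinality of a constant dimension code of
`k`-spaces in `F^{v1}` with minimum subspace distance at least `d` such that some
`v2`-space `W` intersects every codeword in dimension at least `d/2`. -/
noncomputable def Bq (F : Type*) [Field F] (v1 v2 d k : ℕ) : ℕ :=
  sSup {n | ∃ (C : Finset (Submodule F (Fin v1 → F))) (W : Submodule F (Fin v1 → F)),
    C.card = n ∧ IsCDCode F v1 k d C ∧ Module.finrank F ↥W = v2 ∧
    (∀ U ∈ C, d / 2 ≤ Module.finrank F ↥(U ⊓ W))}

/-- The Gaussian binomial coefficient `[a choose b]_q`. -/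
noncomputable def gaussBinom (q : ℚ) (a b : ℕ) : ℚ :=
  ∏ i ∈ Finset.range b, (q ^ (a - b + i + 1) - 1) / (q ^ (i + 1) - 1)

/-- The row space of the matrix `(I_k | A)`, viewed as a subspace of `F^v`. -/
noncomputable def rowSpanAug (F : Type*) [Field F] (k v : ℕ) (h : k ≤ v)
    (A : Matrix (Fin k) (Fin (v - k)) F) : Submodule F (Fin v → F) :=
  Submodule.span F (Set.range fun i : Fin k =>
    Fin.append ((1 : Matrix (Fin k) (Fin k) F) i) (A i) ∘ Fin.cast (Nat.add_sub_cancel' h).symm)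

/-!
Let `K₂ = 𝔽_{q²}`, `K₃ = 𝔽_{q³}`, and work in `V = K₂⁴ × (K₃ × K₂) ≅ 𝔽_q¹³` with the 5-space
`W = 0 × (K₃ × K₂)`. Fix an `𝔽_q`-linear embedding `ι : K₂ → K₃` with a left inverse `π`. The
`q³ + 1` planes `L_∞ = ι(K₂) × 0` and `L_c = {(c ι(h), h)}` (`c ∈ K₃`) of `W` meet pairwise
trivially, and `ψ_c : K₃ → W` (`z ↦ (z, π z)` for `c = ∞`, `z ↦ (z, 0)` otherwise) has image
meeting `L_c` trivially. For `c`, a point `P` of `PG(3, q²)` and `a ∈ K₃`, the codeword is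
`{(s, l + ψ_c(a ι(t_s))) : s ∈ P, l ∈ L_c}`, where `t_s ∈ K₂` is a coordinate of `s` on the line
`P`. It is 4-dimensional and contains `L_c ⊆ W`. Two distinct codewords meet in dimension at most
2: for different points the intersection lies in `W`, hence in `L_c`; for the same point and
different `c` it projects injectively into `P`; for the same `(c, P)` and `a ≠ a'` the element
`ψ_c((a - a') ι(t))` avoids `L_c` unless `t = 0`. There are `(q³ + 1)(q⁶ + q⁴ + q² + 1) q³`
codewords.
-/

open Module
open scoped LinearAlgebra.Projectivization

section Transfer

variable {F V : Type*} [Field F] [AddCommGroup V] [Module F V]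

theorem subspaceDist_self (U : Submodule F V) : subspaceDist U U = 0 := by
  rw [subspaceDist, sup_idem, inf_idem, Nat.sub_self]

theorem subspaceDist_eq (U U' : Submodule F V) [FiniteDimensional F U] [FiniteDimensional F U'] :
    subspaceDist U U' = finrank F U + finrank F U' - 2 * finrank F ↥(U ⊓ U') := by
  have := Submodule.finrank_sup_add_finrank_inf_eq U U'
  rw [subspaceDist]
  omega

theorem subspaceDist_map_linearEquiv {V' : Type*} [AddCommGroup V'] [Module F V']
    (e : V ≃ₗ[F] V') (U U' : Submodule F V) :
    subspaceDist (U.map (e : V →ₗ[F] V')) (U'.map (e : V →ₗ[F] V')) = subspaceDist U U' := by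
  rw [subspaceDist, ← Submodule.map_sup, ← Submodule.map_inf _ e.injective,
    LinearEquiv.finrank_map_eq, LinearEquiv.finrank_map_eq, subspaceDist]

theorem card_le_Bq [Finite F] {v₁ v₂ d k : ℕ} {C : Finset (Submodule F (Fin v₁ → F))}
    {W : Submodule F (Fin v₁ → F)} (hC : IsCDCode F v₁ k d C) (hW : finrank F W = v₂)
    (hCW : ∀ U ∈ C, d / 2 ≤ finrank F ↥(U ⊓ W)) :
    C.card ≤ Bq F v₁ v₂ d k := by
  refine le_csSup ?_ ⟨C, W, rfl, hC, hW, hCW⟩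
  refine ((Set.finite_range (Finset.card : Finset (Submodule F (Fin v₁ → F)) → ℕ)).subset
    ?_).bddAbove
  rintro n ⟨C', -, rfl, -⟩
  exact ⟨C', rfl⟩

theorem natCard_le_Bq {ι : Type*} [Finite ι] [Finite F] {v₁ v₂ d k : ℕ}
    (e : V ≃ₗ[F] (Fin v₁ → F)) (U : ι → Submodule F V) (W : Submodule F V)
    (hU : ∀ i, finrank F (U i) = k) (hW : finrank F W = v₂)
    (hUU : Pairwise fun i j => d ≤ subspaceDist (U i) (U j))
    (hUW : ∀ i, d / 2 ≤ finrank F ↥(U i ⊓ W)) (hd : 0 < d) :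
    Nat.card ι ≤ Bq F v₁ v₂ d k := by
  classical
  have := Fintype.ofFinite ι
  let U' i := (U i).map (e : V →ₗ[F] Fin v₁ → F)
  have hinj : Function.Injective U' := by
    intro i j hij
    by_contra hne
    have : d ≤ subspaceDist (U i) (U j) := hUU hne
    rw [Submodule.map_injective_of_injective e.injective hij, subspaceDist_self] at this
    omega
  rw [Nat.card_eq_fintype_card, ← Finset.card_univ, ← Finset.card_image_of_injective _ hinj]
  refine card_le_Bq (W := W.map (e : V →ₗ[F] Fin v₁ → F)) ⟨?_, ?_⟩
    (by rwa [LinearEquiv.finrank_map_eq]) ?_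
  · simp only [Finset.forall_mem_image, Finset.mem_univ, forall_const]
    exact fun i => (LinearEquiv.finrank_map_eq e _).trans (hU i)
  · simp only [Finset.forall_mem_image, Finset.mem_univ, forall_const]
    intro i j hij
    rw [subspaceDist_map_linearEquiv]
    exact hUU fun h => hij (by rw [h])
  · simp only [Finset.forall_mem_image, Finset.mem_univ, forall_const]
    intro i
    rw [← Submodule.map_inf _ e.injective, LinearEquiv.finrank_map_eq]
    exact hUW i

end Transfer

section Shear

variable {F M W : Type*} [Field F] [AddCommGroup M] [Module F M] [AddCommGroup W] [Module F W]

namespace Submodule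

def shearProd (S : Submodule F M) (L : Submodule F W) (φ : M →ₗ[F] W) : Submodule F (M × W) :=
  (S.prod L).map ((LinearEquiv.refl F M).skewProd (.refl F W) φ).toLinearMap

variable {S S' : Submodule F M} {L L' : Submodule F W} {φ φ' : M →ₗ[F] W}

theorem mem_shearProd {x : M × W} : x ∈ S.shearProd L φ ↔ x.1 ∈ S ∧ x.2 - φ x.1 ∈ L := by
  simp [shearProd, mem_map_equiv, LinearEquiv.skewProd_symm_apply]

theorem finrank_prod [FiniteDimensional F S] [FiniteDimensional F L] :
    finrank F ↥(S.prod L) = finrank F S + finrank F L := by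
  have hinj : Function.Injective (S.subtype.prodMap L.subtype) := by
    rw [LinearMap.coe_prodMap]
    exact Prod.map_injective.2 ⟨S.injective_subtype, L.injective_subtype⟩
  rw [← Module.finrank_prod, ← LinearMap.finrank_range_of_inj hinj,
    LinearMap.range_prodMap, range_subtype, range_subtype]

theorem finrank_shearProd [FiniteDimensional F S] [FiniteDimensional F L] :
    finrank F ↥(S.shearProd L φ) = finrank F S + finrank F L := by
  rw [shearProd, LinearEquiv.finrank_map_eq, finrank_prod]

theorem finrank_map_inr : finrank F ↥(L.map (LinearMap.inr F M W)) = finrank F L :=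
  (equivMapOfInjective _ LinearMap.inr_injective L).finrank_eq.symm

theorem finrank_le_finrank_shearProd_inf_range_inr [FiniteDimensional F W] :
    finrank F L ≤ finrank F ↥(S.shearProd L φ ⊓ LinearMap.range (LinearMap.inr F M W)) := by
  rw [← finrank_map_inr (M := M)]
  refine finrank_mono (le_inf ?_ LinearMap.map_le_range)
  rintro _ ⟨l, hl, rfl⟩
  simpa [mem_shearProd] using hl

theorem finrank_shearProd_inf_le_of_forall_mem_sup [FiniteDimensional F W]
    (h : ∀ s ∈ S ⊓ S', φ s - φ' s ∈ L ⊔ L' → s = 0) :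
    finrank F ↥(S.shearProd L φ ⊓ S'.shearProd L' φ') ≤ finrank F ↥(L ⊓ L') := by
  rw [← finrank_map_inr (M := M) (L := L ⊓ L')]
  refine finrank_mono ?_
  rintro ⟨s, w⟩ ⟨hx, hx'⟩
  rw [SetLike.mem_coe, mem_shearProd] at hx hx'
  have hs : s = 0 := h s ⟨hx.1, hx'.1⟩ <| by
    simpa using sub_mem (mem_sup_right hx'.2) (mem_sup_left hx.2)
  subst hs
  simp only [map_zero, sub_zero] at hx hx'
  exact ⟨w, ⟨hx.2, hx'.2⟩, rfl⟩

theorem finrank_shearProd_inf_le_of_disjoint [FiniteDimensional F M] (h : Disjoint L L') :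
    finrank F ↥(S.shearProd L φ ⊓ S'.shearProd L' φ') ≤ finrank F ↥(S ⊓ S') := by
  set U := S.shearProd L φ ⊓ S'.shearProd L' φ'
  have hinj : Function.Injective (LinearMap.fst F M W ∘ₗ U.subtype) := by
    rw [← LinearMap.ker_eq_bot, LinearMap.ker_eq_bot']
    rintro ⟨⟨s, w⟩, hx, hx'⟩ (hs : s = 0)
    subst hs
    rw [SetLike.mem_coe, mem_shearProd] at hx hx'
    simp only [map_zero, sub_zero] at hx hx'
    exact Subtype.ext (Prod.ext rfl (disjoint_def.1 h w hx.2 hx'.2))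
  rw [← LinearMap.finrank_range_of_inj hinj]
  refine finrank_mono ?_
  rintro _ ⟨⟨x, hx, hx'⟩, rfl⟩
  exact ⟨(mem_shearProd.1 hx).1, (mem_shearProd.1 hx').1⟩

end Submodule

end Shear

section Spread

variable {F E K : Type*} [Field F] [AddCommGroup E] [Module F E] [Field K] [Algebra F K]

def spreadEmb (ι : E →ₗ[F] K) : Option K → E →ₗ[F] K × E
  | none => LinearMap.inl F K E ∘ₗ ι
  | some c => (LinearMap.mulLeft F c ∘ₗ ι).prod LinearMap.id

def spreadCompl (π : K →ₗ[F] E) : Option K → K →ₗ[F] K × E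
  | none => LinearMap.id.prod π
  | some _ => LinearMap.inl F K E

variable {ι : E →ₗ[F] K} {π : K →ₗ[F] E}

@[simp] theorem spreadEmb_none_apply (h : E) : spreadEmb ι none h = (ι h, 0) := rfl

@[simp] theorem spreadEmb_some_apply (c : K) (h : E) : spreadEmb ι (some c) h = (c * ι h, h) := rfl

@[simp] theorem spreadCompl_none_apply (z : K) : spreadCompl π none z = (z, π z) := rfl

@[simp] theorem spreadCompl_some_apply (c z : K) : spreadCompl π (some c) z = (z, 0) := rfl

theorem spreadEmb_injective (hι : Function.Injective ι) (c : Option K) :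
    Function.Injective (spreadEmb ι c) := by
  cases c with
  | none => exact LinearMap.inl_injective.comp hι
  | some c => exact fun h h' he => congrArg Prod.snd he

theorem eq_zero_of_spreadEmb_eq (hι : Function.Injective ι) {c c' : Option K} (hcc : c ≠ c')
    {h h' : E} (he : spreadEmb ι c h = spreadEmb ι c' h') : h' = 0 := by
  match c, c' with
  | none, none => exact absurd rfl hcc
  | none, some c' => simpa using (congrArg Prod.snd he).symm
  | some c, none =>
    simp only [spreadEmb_some_apply, spreadEmb_none_apply, Prod.mk.injEq] at he
    obtain ⟨h₁, rfl⟩ := he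
    exact hι (by simpa using h₁.symm)
  | some c, some c' =>
    simp only [spreadEmb_some_apply, Prod.mk.injEq] at he
    obtain ⟨h₁, rfl⟩ := he
    have : (c - c') * ι h = 0 := by rw [sub_mul, h₁, sub_self]
    exact hι <| by simpa [sub_eq_zero, Option.some_inj.not.1 hcc] using this

theorem disjoint_range_spreadEmb (hι : Function.Injective ι) {c c' : Option K} (hcc : c ≠ c') :
    Disjoint (LinearMap.range (spreadEmb ι c)) (LinearMap.range (spreadEmb ι c')) := by
  rw [Submodule.disjoint_def]
  rintro _ ⟨h, rfl⟩ ⟨h', he⟩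
  rw [eq_zero_of_spreadEmb_eq hι hcc.symm he, map_zero]

theorem eq_zero_of_spreadCompl_mem_range (hπι : Function.LeftInverse π ι) {c : Option K} {z : K}
    (hz : spreadCompl π c z ∈ LinearMap.range (spreadEmb ι c)) : z = 0 := by
  obtain ⟨h, he⟩ := hz
  cases c with
  | none =>
    simp only [spreadEmb_none_apply, spreadCompl_none_apply, Prod.mk.injEq] at he
    obtain ⟨rfl, h₂⟩ := he
    rw [← hπι h, ← h₂, map_zero]
  | some c =>
    simp only [spreadEmb_some_apply, spreadCompl_some_apply, Prod.mk.injEq] at he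
    obtain ⟨rfl, rfl⟩ := he
    simp

theorem finrank_range_spreadEmb (hι : Function.Injective ι) (c : Option K) :
    finrank F (LinearMap.range (spreadEmb ι c)) = finrank F E :=
  LinearMap.finrank_range_of_inj (spreadEmb_injective hι c)

end Spread

theorem Projectivization.submodule_inf_eq_bot {K V : Type*} [DivisionRing K] [AddCommGroup V]
    [Module K V] {m m' : ℙ K V} (h : m ≠ m') : m.submodule ⊓ m'.submodule = ⊥ := by
  have : FiniteDimensional K m.submodule :=
    Module.finite_of_finrank_pos (by rw [finrank_submodule]; exact one_pos)
  have hlt : m.submodule ⊓ m'.submodule < m.submodule := inf_lt_left.2 fun hle =>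
    h <| submodule_injective <| Submodule.eq_of_le_of_finrank_eq hle <| by
      rw [finrank_submodule, finrank_submodule]
  have := Submodule.finrank_lt_finrank_of_lt hlt
  rw [finrank_submodule, Nat.lt_one_iff] at this
  exact Submodule.finrank_eq_zero.1 this

theorem Projectivization.finrank_restrictScalars_submodule (F : Type*) {K V : Type*} [Field F]
    [Field K] [Algebra F K] [AddCommGroup V] [Module K V] [Module F V] [IsScalarTower F K V]
    (m : ℙ K V) : finrank F (m.submodule.restrictScalars F) = finrank F K := by
  rw [← mul_one (finrank F K), ← m.finrank_submodule]
  exact (Module.finrank_mul_finrank F K m.submodule).symm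

theorem Projectivization.eq_zero_of_mem_submodule_of_apply_eq_zero {K V : Type*} [Field K]
    [AddCommGroup V] [Module K V] {m : ℙ K V} {g : Module.Dual K V}
    (hg : g m.rep ≠ 0) {s : V} (hs : s ∈ m.submodule) (hgs : g s = 0) : s = 0 := by
  rw [m.submodule_eq, Submodule.mem_span_singleton] at hs
  obtain ⟨t, rfl⟩ := hs
  rw [map_smul, smul_eq_mul, mul_eq_zero] at hgs
  simp [hgs.resolve_right hg]

section Codeword

variable {F K₂ K₃ M : Type*} [Field F] [Field K₂] [Field K₃] [Algebra F K₂] [Algebra F K₃]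
  [AddCommGroup M] [Module K₂ M] [Module F M] [IsScalarTower F K₂ M]

/-- `f m` is only required not to vanish on the line `m`, where it serves as a coordinate. -/
def codeword (ι : K₂ →ₗ[F] K₃) (π : K₃ →ₗ[F] K₂) (f : ℙ K₂ M → Module.Dual K₂ M)
    (x : Option K₃ × ℙ K₂ M × K₃) : Submodule F (M × (K₃ × K₂)) :=
  (x.2.1.submodule.restrictScalars F).shearProd (LinearMap.range (spreadEmb ι x.1))
    (spreadCompl π x.1 ∘ₗ LinearMap.mulLeft F x.2.2 ∘ₗ ι ∘ₗ (f x.2.1).restrictScalars F)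

variable {ι : K₂ →ₗ[F] K₃} {π : K₃ →ₗ[F] K₂} (f : ℙ K₂ M → Module.Dual K₂ M)
  [FiniteDimensional F K₂]

theorem finrank_codeword [FiniteDimensional F M] (hι : Function.Injective ι)
    (x : Option K₃ × ℙ K₂ M × K₃) :
    finrank F (codeword ι π f x) = finrank F K₂ + finrank F K₂ := by
  rw [codeword, Submodule.finrank_shearProd, finrank_range_spreadEmb hι,
    Projectivization.finrank_restrictScalars_submodule]

theorem finrank_le_finrank_codeword_inf_range_inr [FiniteDimensional F K₃]
    (hι : Function.Injective ι) (x : Option K₃ × ℙ K₂ M × K₃) :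
    finrank F K₂ ≤
      finrank F ↥(codeword ι π f x ⊓ LinearMap.range (LinearMap.inr F M (K₃ × K₂))) := by
  rw [← finrank_range_spreadEmb hι x.1]
  exact Submodule.finrank_le_finrank_shearProd_inf_range_inr

theorem finrank_codeword_inf_le [FiniteDimensional F K₃] [FiniteDimensional F M]
    (hπι : Function.LeftInverse π ι) (hf : ∀ m, f m m.rep ≠ 0)
    {x x' : Option K₃ × ℙ K₂ M × K₃} (hxx : x ≠ x') :
    finrank F ↥(codeword ι π f x ⊓ codeword ι π f x') ≤ finrank F K₂ := by
  obtain ⟨c, m, a⟩ := x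
  obtain ⟨c', m', a'⟩ := x'
  have hι := hπι.injective
  by_cases hm : m = m'
  · subst hm
    by_cases hc : c = c'
    · subst hc
      have ha : a ≠ a' := fun h => hxx (by rw [h])
      refine (Submodule.finrank_shearProd_inf_le_of_forall_mem_sup ?_).trans_eq
        (by rw [inf_idem, finrank_range_spreadEmb hι])
      intro s ⟨hs, _⟩ hmem
      have hz : (a - a') * ι (f m s) = 0 := by
        refine eq_zero_of_spreadCompl_mem_range hπι (c := c) ?_
        rw [sup_idem] at hmem
        convert hmem using 1
        simp [sub_mul]
      have hfs : f m s = 0 := hι (by simpa [sub_eq_zero, ha] using hz)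
      exact Projectivization.eq_zero_of_mem_submodule_of_apply_eq_zero (hf m) hs hfs
    · refine (Submodule.finrank_shearProd_inf_le_of_disjoint
        (disjoint_range_spreadEmb hι hc)).trans_eq ?_
      rw [inf_idem, Projectivization.finrank_restrictScalars_submodule]
  · refine (Submodule.finrank_shearProd_inf_le_of_forall_mem_sup ?_).trans
      ((Submodule.finrank_mono inf_le_left).trans_eq (finrank_range_spreadEmb hι c))
    intro s hs _
    rwa [← Submodule.restrictScalars_inf, Projectivization.submodule_inf_eq_bot hm,
      Submodule.restrictScalars_bot, Submodule.mem_bot] at hs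

end Codeword

theorem LinearMap.exists_leftInverse_of_finrank_le {F V V' : Type*} [Field F] [AddCommGroup V]
    [Module F V] [AddCommGroup V'] [Module F V'] [FiniteDimensional F V] [FiniteDimensional F V']
    (h : finrank F V ≤ finrank F V') :
    ∃ (ι : V →ₗ[F] V') (π : V' →ₗ[F] V), Function.LeftInverse π ι := by
  obtain ⟨ι, hι⟩ := finrank_le_iff_exists_linearMap.1 h
  obtain ⟨π, hπι⟩ := ι.exists_leftInverse_of_injective (LinearMap.ker_eq_bot.2 hι)
  exact ⟨ι, π, DFunLike.congr_fun hπι⟩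

theorem le_Bq_13_5_4_4_of_finrank_eq {F K₂ K₃ : Type*} [Field F] [Finite F] [Field K₂] [Field K₃]
    [Algebra F K₂] [Algebra F K₃] (h₂ : finrank F K₂ = 2) (h₃ : finrank F K₃ = 3) :
    (Nat.card F ^ 3 + 1) * (Nat.card F ^ 9 + Nat.card F ^ 7 + Nat.card F ^ 5 + Nat.card F ^ 3)
      ≤ Bq F 13 5 4 4 := by
  have : FiniteDimensional F K₂ := Module.finite_of_finrank_eq_succ h₂
  have : FiniteDimensional F K₃ := Module.finite_of_finrank_eq_succ h₃
  have : Finite K₂ := Module.finite_of_finite F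
  have : Finite K₃ := Module.finite_of_finite F
  obtain ⟨ι, π, hπι⟩ := LinearMap.exists_leftInverse_of_finrank_le (F := F) (V := K₂) (V' := K₃)
    (by omega)
  choose f hf using fun m : ℙ K₂ (Fin 4 → K₂) =>
    not_forall.1 ((Module.forall_dual_apply_eq_zero_iff K₂ m.rep).not.2 m.rep_nonzero)
  have hV : finrank F ((Fin 4 → K₂) × (K₃ × K₂)) = finrank F (Fin 13 → F) := by
    simp [Module.finrank_prod, Module.finrank_pi_fintype, h₂, h₃]
  have hcard : Nat.card (Option K₃ × ℙ K₂ (Fin 4 → K₂) × K₃) = (Nat.card F ^ 3 + 1) *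
      (Nat.card F ^ 9 + Nat.card F ^ 7 + Nat.card F ^ 5 + Nat.card F ^ 3) := by
    rw [Nat.card_prod, Nat.card_prod, Finite.card_option,
      Projectivization.card_of_finrank K₂ (Fin 4 → K₂) (Module.finrank_fin_fun K₂),
      Module.natCard_eq_pow_finrank (K := F) (V := K₂),
      Module.natCard_eq_pow_finrank (K := F) (V := K₃), h₂, h₃]
    simp only [Finset.sum_range_succ, Finset.sum_range_zero]
    ring
  rw [← hcard]
  refine natCard_le_Bq (LinearEquiv.ofFinrankEq _ _ hV) (codeword ι π f)
    (LinearMap.range (LinearMap.inr F _ _)) (fun x => ?_) ?_ (fun x x' hxx => ?_) (fun x => ?_)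
    (by norm_num)
  · rw [finrank_codeword f hπι.injective, h₂]
  · rw [LinearMap.finrank_range_of_inj LinearMap.inr_injective, Module.finrank_prod, h₂, h₃]
  · have := finrank_codeword_inf_le f hπι hf hxx
    show 4 ≤ subspaceDist _ _
    rw [subspaceDist_eq, finrank_codeword f hπι.injective, finrank_codeword f hπι.injective]
    omega
  · rw [show 4 / 2 = finrank F K₂ by rw [h₂]]
    exact finrank_le_finrank_codeword_inf_range_inr f hπι.injective x

/-- `B_q(13,5,4;4) ≥ (q^3+1)(q^9+q^7+q^5+q^3)`. -/
theorem stmt_9 (q : ℕ) (F : Type) [Field F] [Fintype F] (hq : Fintype.card F = q) :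
    (q ^ 3 + 1) * (q ^ 9 + q ^ 7 + q ^ 5 + q ^ 3) ≤ Bq F 13 5 4 4 := by
  obtain ⟨p, hp⟩ := CharP.exists F
  have : Fact p.Prime := ⟨CharP.char_is_prime F p⟩
  rw [← hq, ← Nat.card_eq_fintype_card]
  exact le_Bq_13_5_4_4_of_finrank_eq (FiniteField.finrank_extension F p 2)
    (FiniteField.finrank_extension F p 3)
end

section
/- Let q be a prime power and let v, k, d, m be integers with d even, 2 ≤ d ≤ 2k, and k ≤ m ≤ v − k. Then A_q(v,d;k) ≥ A_q(m,d;k) · q^{(v−m)(k−d/2+1)} + A_q(v−m+k−d/2, d; k) (the improved linkage construction). -/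
/-!
Write `d = 2δ`, `n = v - m`, and identify `F^v` with `F^m × K`, where `K` is the degree `n`
extension of `F`. Two `k`-spaces are at subspace distance `≥ 2δ` iff they meet in
dimension `≤ k - δ`.

Parametrize each codeword `U` of an optimal code in `F^m` by `φ_U : F^k ≃ U` and lift it to the
graphs `{(φ_U x, f x)}`, where `f` runs through the `q^(n(k-δ+1))` restrictions to `F^k ⊆ K` of
the linearized polynomials `∑_{i ≤ k-δ} a_i x^(q^i)` (a Gabidulin code: `f - g` has kernel of
dimension `≤ k - δ`). Lifts of the same `U` meet in the graph of `ker (f - g)`; lifts of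
different `U, U'` project injectively into `U ∩ U'`. Finally embed an optimal code of
`F^(k-δ) × K ≅ F^(v-m+k-δ)` through a `(k-δ)`-space `T ⊆ F^m`: its spaces project into `T`,
so they meet every lift in dimension `≤ k - δ`.
-/

open Module Polynomial LinearMap

section Gabidulin

variable {F K : Type*} [Field F] [Fintype F] [Field K] [Algebra F K]

variable (F) in
noncomputable def linearizedPolyMap {t : ℕ} (a : Fin t → K) : K →ₗ[F] K :=
  ∑ i : Fin t, a i • (FiniteField.frobeniusAlgHom F K).toLinearMap ^ (i : ℕ)

theorem linearizedPolyMap_apply {t : ℕ} (a : Fin t → K) (x : K) :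
    linearizedPolyMap F a x = ∑ i : Fin t, a i * x ^ Fintype.card F ^ (i : ℕ) := by
  simp [linearizedPolyMap, LinearMap.sum_apply, Module.End.pow_apply,
    FiniteField.coe_frobeniusAlgHom, pow_iterate]

theorem linearizedPolyMap_sub {t : ℕ} (a b : Fin t → K) :
    linearizedPolyMap F (a - b) = linearizedPolyMap F a - linearizedPolyMap F b := by
  ext x
  simp [linearizedPolyMap_apply, sub_mul, Finset.sum_sub_distrib]

-- The kernel consists of roots of `∑ i, a i X ^ q ^ i`, a nonzero polynomial of degree at most
-- `q ^ (t - 1)`.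
theorem finrank_ker_linearizedPolyMap_le [Finite K] {t : ℕ} {a : Fin t → K} (ha : a ≠ 0) :
    finrank F (ker (linearizedPolyMap F a)) ≤ t - 1 := by
  set q := Fintype.card F
  have hq : 1 < q := Fintype.one_lt_card
  let P : K[X] := ∑ i : Fin t, monomial (q ^ (i : ℕ)) (a i)
  have hcoeff : ∀ j : Fin t, P.coeff (q ^ (j : ℕ)) = a j := fun j => by
    rw [finsetSum_coeff, Finset.sum_eq_single j (fun i _ hij => ?_) (by simp), coeff_monomial,
      if_pos rfl]
    exact coeff_monomial_of_ne _ fun h => hij (Fin.ext (Nat.pow_right_injective hq h).symm)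
  obtain ⟨j, hj⟩ := Function.ne_iff.mp ha
  have hP : P ≠ 0 := fun h => hj (by rw [← hcoeff j, h, coeff_zero]; rfl)
  have hdeg : P.natDegree ≤ q ^ (t - 1) :=
    natDegree_sum_le_of_forall_le _ _ fun i _ => (natDegree_monomial_le _).trans
      (Nat.pow_le_pow_right (by omega) (by omega))
  have hker : (ker (linearizedPolyMap F a) : Set K) ⊆ P.rootSet K := fun x hx => by
    rw [mem_rootSet_of_ne hP, coe_aeval_eq_eval, eval_finsetSum]
    simpa [linearizedPolyMap_apply] using hx
  have hcard : q ^ finrank F (ker (linearizedPolyMap F a)) ≤ q ^ (t - 1) :=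
    calc q ^ finrank F (ker (linearizedPolyMap F a))
        = Set.ncard (ker (linearizedPolyMap F a) : Set K) := by
          rw [← Nat.card_coe_set_eq, SetLike.coe_sort_coe, Module.natCard_eq_pow_finrank (K := F),
            Nat.card_eq_fintype_card]
      _ ≤ Set.ncard (P.rootSet K) := Set.ncard_le_ncard hker (Set.toFinite _)
      _ ≤ P.natDegree := ncard_rootSet_le P K
      _ ≤ q ^ (t - 1) := hdeg
  exact (Nat.pow_le_pow_iff_right hq).mp hcard

end Gabidulin

section RankDistance

variable {F K E : Type*} [Field F] [Fintype F] [Field K] [Fintype K] [Algebra F K]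
  [AddCommGroup E] [Module F E]

-- Gabidulin codes.
theorem exists_rankDistanceCode (ι : E →ₗ[F] K) (hι : Function.Injective ι) {t : ℕ}
    (ht : t ≤ finrank F E) :
    ∃ D : Finset (E →ₗ[F] K), D.card = Fintype.card K ^ t ∧
      ∀ f ∈ D, ∀ g ∈ D, f ≠ g → finrank F (ker (f - g)) ≤ t - 1 := by
  classical
  let G : (Fin t → K) → (E →ₗ[F] K) := fun a => linearizedPolyMap F a ∘ₗ ι
  have hG_sub : ∀ a c, G a - G c = G (a - c) := fun a c => by
    simp only [G, linearizedPolyMap_sub, LinearMap.sub_comp]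
  have hG_ker : ∀ a ≠ 0, finrank F (ker (G a)) ≤ t - 1 := fun a ha =>
    calc finrank F (ker (G a))
        = finrank F (((ker (linearizedPolyMap F a)).comap ι).map ι) := by
          rw [ker_comp]; exact (Submodule.equivMapOfInjective ι hι _).finrank_eq
      _ ≤ finrank F (ker (linearizedPolyMap F a)) :=
          Submodule.finrank_mono (Submodule.map_comap_le _ _)
      _ ≤ t - 1 := finrank_ker_linearizedPolyMap_le ha
  have hG_inj : Function.Injective G := fun a c hac => by
    by_contra hne
    obtain ⟨j, -⟩ := Function.ne_iff.mp hne
    have hker := hG_ker (a - c) (sub_ne_zero.mpr hne)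
    rw [← hG_sub, hac, sub_self, ker_zero, finrank_top] at hker
    have := j.pos
    omega
  refine ⟨Finset.univ.image G, ?_, ?_⟩
  · rw [Finset.card_image_of_injective _ hG_inj, Finset.card_univ, Fintype.card_fun,
      Fintype.card_fin]
  · simp only [Finset.mem_image, Finset.mem_univ, true_and]
    rintro _ ⟨a, rfl⟩ _ ⟨c, rfl⟩ hac
    rw [hG_sub]
    exact hG_ker _ (sub_ne_zero.mpr fun h => hac (h ▸ rfl))

theorem exists_finiteField_extension_finrank_eq (F : Type*) [Field F] [Finite F] {n : ℕ}
    (hn : n ≠ 0) :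
    ∃ (K : Type) (_ : Field K) (_ : Fintype K) (_ : Algebra F K), finrank F K = n :=
  have : Fact (ringChar F).Prime := ⟨CharP.char_is_prime F _⟩
  have : NeZero n := ⟨hn⟩
  ⟨FiniteField.Extension F (ringChar F) n, inferInstance, Fintype.ofFinite _, inferInstance,
    FiniteField.finrank_extension F _ n⟩

end RankDistance

section SubspaceDist

variable {F V : Type*} [Field F] [AddCommGroup V] [Module F V] [FiniteDimensional F V]

theorem subspaceDist_add_two_mul_finrank_inf (U W : Submodule F V) :
    subspaceDist U W + 2 * finrank F ↥(U ⊓ W) = finrank F U + finrank F W := by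
  have hsum := Submodule.finrank_sup_add_finrank_inf_eq U W
  have hle : finrank F ↥(U ⊓ W) ≤ finrank F ↥(U ⊔ W) :=
    Submodule.finrank_mono (inf_le_left.trans le_sup_left)
  rw [subspaceDist]
  omega

theorem two_mul_le_subspaceDist_iff {U W : Submodule F V} {k δ : ℕ} (hU : finrank F U = k)
    (hW : finrank F W = k) (hδ : δ ≤ k) :
    2 * δ ≤ subspaceDist U W ↔ finrank F ↥(U ⊓ W) ≤ k - δ := by
  have := subspaceDist_add_two_mul_finrank_inf U W
  omega

end SubspaceDist

section Aq

variable {F : Type*} [Field F]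

theorem IsCDCode.finrank_inf_le {v k δ : ℕ} {C : Finset (Submodule F (Fin v → F))}
    (hC : IsCDCode F v k (2 * δ) C) (hδ : δ ≤ k) :
    ∀ U ∈ C, ∀ U' ∈ C, U ≠ U' → finrank F ↥(U ⊓ U') ≤ k - δ := by
  intro U hU U' hU' hne
  exact (two_mul_le_subspaceDist_iff (hC.1 U hU) (hC.1 U' hU') hδ).mp (hC.2 U hU U' hU' hne)

variable [Fintype F]

theorem bddAbove_card_isCDCode (v d k : ℕ) :
    BddAbove {n | ∃ C : Finset (Submodule F (Fin v → F)),
      C.card = n ∧ IsCDCode F v k d C} := by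
  have := Fintype.ofFinite (Submodule F (Fin v → F))
  exact ⟨Fintype.card (Submodule F (Fin v → F)), by
    rintro n ⟨C, rfl, -⟩
    exact C.card_le_univ⟩

theorem exists_isCDCode_card_eq_Aq (v d k : ℕ) :
    ∃ C : Finset (Submodule F (Fin v → F)), C.card = Aq F v d k ∧ IsCDCode F v k d C :=
  Nat.sSup_mem
    (s := {n | ∃ C : Finset (Submodule F (Fin v → F)), C.card = n ∧ IsCDCode F v k d C})
    ⟨0, ∅, rfl, by simp [IsCDCode]⟩ (bddAbove_card_isCDCode v d k)

theorem IsCDCode.card_le_Aq {v d k : ℕ} {C : Finset (Submodule F (Fin v → F))}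
    (hC : IsCDCode F v k d C) : C.card ≤ Aq F v d k :=
  le_csSup (bddAbove_card_isCDCode v d k) ⟨C, rfl, hC⟩

theorem card_le_Aq_of_finrank_inf_le {ι V : Type*} {v : ℕ} [AddCommGroup V] [Module F V]
    (e : V ≃ₗ[F] (Fin v → F)) {s : Finset ι} {P : ι → Submodule F V} {k δ : ℕ}
    (hδ : 0 < δ) (hδk : δ ≤ k) (hP : ∀ i ∈ s, finrank F (P i) = k)
    (hPP : ∀ i ∈ s, ∀ j ∈ s, i ≠ j → finrank F ↥(P i ⊓ P j) ≤ k - δ) :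
    s.card ≤ Aq F v (2 * δ) k := by
  classical
  let Q : ι → Submodule F (Fin v → F) := fun i => (P i).map e.toLinearMap
  have hQ : ∀ i ∈ s, finrank F (Q i) = k := fun i hi =>
    (LinearEquiv.finrank_map_eq e _).trans (hP i hi)
  have hQQ : ∀ i ∈ s, ∀ j ∈ s, i ≠ j → finrank F ↥(Q i ⊓ Q j) ≤ k - δ :=
    fun i hi j hj hij => by
      rw [← Submodule.map_inf _ e.injective, LinearEquiv.finrank_map_eq]
      exact hPP i hi j hj hij
  have hinj : Set.InjOn Q s := fun i hi j hj hQij => by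
    by_contra hij
    have := hQQ i hi j hj hij
    rw [hQij, inf_idem, hQ j hj] at this
    omega
  rw [← Finset.card_image_of_injOn hinj]
  refine IsCDCode.card_le_Aq ⟨?_, ?_⟩
  · simp only [Finset.mem_image]
    rintro _ ⟨i, hi, rfl⟩
    exact hQ i hi
  · simp only [Finset.mem_image]
    rintro _ ⟨i, hi, rfl⟩ _ ⟨j, hj, rfl⟩ hne
    exact (two_mul_le_subspaceDist_iff (hQ i hi) (hQ j hj) hδk).mpr
      (hQQ i hi j hj fun h => hne (h ▸ rfl))

end Aq

section Linkage

variable {F E M N W : Type*} [Field F] [AddCommGroup E] [Module F E] [AddCommGroup M] [Module F M]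
  [AddCommGroup N] [Module F N] [AddCommGroup W] [Module F W]

variable (E) in
theorem exists_parametrization_of_finrank_eq [FiniteDimensional F E] [FiniteDimensional F M] :
    ∃ φ : Submodule F M → E →ₗ[F] M, ∀ U : Submodule F M, finrank F U = finrank F E →
      Function.Injective (φ U) ∧ range (φ U) = U := by
  have (U : Submodule F M) : ∃ ψ : E →ₗ[F] M, finrank F U = finrank F E →
      Function.Injective ψ ∧ range ψ = U := by
    by_cases hU : finrank F U = finrank F E
    · let e := LinearEquiv.ofFinrankEq E U hU.symm
      refine ⟨U.subtype ∘ₗ e.toLinearMap,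
        fun _ => ⟨U.injective_subtype.comp e.injective, ?_⟩⟩
      rw [range_comp, LinearEquiv.range, Submodule.map_subtype_top]
    · exact ⟨0, fun h => absurd h hU⟩
  choose φ hφ using this
  exact ⟨φ, hφ⟩

theorem exists_injective_finrank_map_fst_range_le [FiniteDimensional F M]
    [FiniteDimensional F N] {c w : ℕ} (hc : c ≤ finrank F M) (hw : w = c + finrank F N) :
    ∃ J : (Fin w → F) →ₗ[F] M × N, Function.Injective J ∧
      finrank F ((range J).map (fst F M N)) ≤ c := by
  obtain ⟨ι, hι⟩ := finrank_le_iff_exists_linearMap.mp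
    (show finrank F (Fin c → F) ≤ finrank F M by rwa [finrank_fin_fun])
  let e : (Fin w → F) ≃ₗ[F] (Fin c → F) × N :=
    LinearEquiv.ofFinrankEq _ _ (by rw [finrank_fin_fun, finrank_prod, finrank_fin_fun, hw])
  let J : (Fin w → F) →ₗ[F] M × N := ι.prodMap LinearMap.id ∘ₗ e.toLinearMap
  refine ⟨J, ?_, ?_⟩
  · rw [coe_comp, coe_prodMap]
    exact (hι.prodMap Function.injective_id).comp e.injective
  · have hle : (range J).map (fst F M N) ≤ range ι := by
      rintro _ ⟨_, ⟨x, rfl⟩, rfl⟩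
      exact ⟨(e x).1, rfl⟩
    exact (Submodule.finrank_mono hle).trans ((finrank_range_le ι).trans (by simp))

theorem finrank_inf_le_finrank_map_fst_inf [FiniteDimensional F M] {P : Submodule F (M × N)}
    (hP : Disjoint P (ker (fst F M N))) (Q : Submodule F (M × N)) :
    finrank F ↥(P ⊓ Q) ≤ finrank F ↥(P.map (fst F M N) ⊓ Q.map (fst F M N)) := by
  have hinj : Function.Injective ((fst F M N).domRestrict (P ⊓ Q)) :=
    injective_domRestrict_iff.mpr (hP.mono_left inf_le_left)
  rw [← finrank_range_of_inj hinj, range_domRestrict]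
  exact Submodule.finrank_mono (Submodule.map_inf_le _)

theorem disjoint_range_prod_ker_fst {φ : E →ₗ[F] M} (hφ : Function.Injective φ)
    (f : E →ₗ[F] N) :
    Disjoint (range (φ.prod f)) (ker (fst F M N)) := by
  rw [Submodule.disjoint_def]
  rintro _ ⟨x, rfl⟩ hx
  have hφx : φ x = 0 := hx
  simp [(injective_iff_map_eq_zero φ).mp hφ x hφx]

theorem map_fst_range_prod (φ : E →ₗ[F] M) (f : E →ₗ[F] N) :
    (range (φ.prod f)).map (fst F M N) = range φ := by
  rw [← range_comp, fst_prod]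

theorem finrank_range_prod {φ : E →ₗ[F] M} (hφ : Function.Injective φ) (f : E →ₗ[F] N) :
    finrank F (range (φ.prod f)) = finrank F E :=
  finrank_range_of_inj fun _ _ h => hφ (congrArg Prod.fst h)

theorem finrank_range_prod_inf_range_prod_le [FiniteDimensional F E] {φ : E →ₗ[F] M}
    (hφ : Function.Injective φ) (f g : E →ₗ[F] N) :
    finrank F ↥(range (φ.prod f) ⊓ range (φ.prod g)) ≤ finrank F (ker (f - g)) := by
  have hle : range (φ.prod f) ⊓ range (φ.prod g) ≤ (ker (f - g)).map (φ.prod f) := by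
    rintro _ ⟨⟨x, rfl⟩, ⟨y, hy⟩⟩
    obtain rfl : y = x := hφ (congrArg Prod.fst hy)
    refine ⟨y, ?_, rfl⟩
    simpa [sub_eq_zero] using (congrArg Prod.snd hy).symm
  exact (Submodule.finrank_mono hle).trans (Submodule.finrank_map_le _ _)

def linkageFamily (φ : Submodule F M → E →ₗ[F] M) (J : W →ₗ[F] M × N) :
    (Submodule F M × (E →ₗ[F] N)) ⊕ Submodule F W → Submodule F (M × N) :=
  Sum.elim (fun p => range ((φ p.1).prod p.2)) (fun S => S.map J)

theorem linkageFamily_inl (φ : Submodule F M → E →ₗ[F] M) (J : W →ₗ[F] M × N)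
    (U : Submodule F M) (f : E →ₗ[F] N) :
    linkageFamily φ J (.inl (U, f)) = range ((φ U).prod f) := rfl

theorem linkageFamily_inr (φ : Submodule F M → E →ₗ[F] M) (J : W →ₗ[F] M × N)
    (S : Submodule F W) : linkageFamily φ J (.inr S) = S.map J := rfl

variable {φ : Submodule F M → E →ₗ[F] M} {J : W →ₗ[F] M × N}
  {C₁ : Finset (Submodule F M)} {D : Finset (E →ₗ[F] N)} {C₂ : Finset (Submodule F W)}

theorem finrank_linkageFamily {k : ℕ} (hE : finrank F E = k)
    (hφ : ∀ U ∈ C₁, Function.Injective (φ U)) (hJ : Function.Injective J)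
    (hC₂ : ∀ S ∈ C₂, finrank F S = k) :
    ∀ i ∈ (C₁ ×ˢ D).disjSum C₂, finrank F (linkageFamily φ J i) = k := by
  rintro (⟨U, f⟩ | S) hi <;> simp only [Finset.inl_mem_disjSum, Finset.inr_mem_disjSum,
    Finset.mem_product] at hi
  · rw [linkageFamily_inl]
    exact (finrank_range_prod (hφ U hi.1) f).trans hE
  · rw [linkageFamily_inr]
    exact ((S.equivMapOfInjective J hJ).finrank_eq).symm.trans (hC₂ S hi)

theorem finrank_linkageFamily_inf_le [FiniteDimensional F E] [FiniteDimensional F M] {c : ℕ}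
    (hφ : ∀ U ∈ C₁, Function.Injective (φ U) ∧ range (φ U) = U)
    (hJ : Function.Injective J) (hJc : finrank F ((range J).map (fst F M N)) ≤ c)
    (hC₁ : ∀ U ∈ C₁, ∀ U' ∈ C₁, U ≠ U' → finrank F ↥(U ⊓ U') ≤ c)
    (hD : ∀ f ∈ D, ∀ g ∈ D, f ≠ g → finrank F (ker (f - g)) ≤ c)
    (hC₂ : ∀ S ∈ C₂, ∀ S' ∈ C₂, S ≠ S' → finrank F ↥(S ⊓ S') ≤ c) :
    ∀ i ∈ (C₁ ×ˢ D).disjSum C₂, ∀ j ∈ (C₁ ×ˢ D).disjSum C₂, i ≠ j →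
      finrank F ↥(linkageFamily φ J i ⊓ linkageFamily φ J j) ≤ c := by
  have hlift : ∀ U ∈ C₁, ∀ f Q, finrank F ↥(range ((φ U).prod f) ⊓ Q) ≤
      finrank F ↥(U ⊓ Q.map (fst F M N)) := fun U hU f Q => by
    have := finrank_inf_le_finrank_map_fst_inf (disjoint_range_prod_ker_fst (hφ U hU).1 f) Q
    rwa [map_fst_range_prod, (hφ U hU).2] at this
  have hcross : ∀ U ∈ C₁, ∀ (f : E →ₗ[F] N) (S : Submodule F W),
      finrank F ↥(range ((φ U).prod f) ⊓ S.map J) ≤ c :=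
    fun U hU f S => (hlift U hU f _).trans <| (Submodule.finrank_mono <| inf_le_right.trans <|
      Submodule.map_mono LinearMap.map_le_range).trans hJc
  rintro (⟨U, f⟩ | S) hi (⟨U', g⟩ | S') hj hij <;>
    simp only [Finset.inl_mem_disjSum, Finset.inr_mem_disjSum, Finset.mem_product] at hi hj
  · rw [linkageFamily_inl, linkageFamily_inl]
    by_cases hU : U = U'
    · subst hU
      have hfg : f ≠ g := fun h => hij (h ▸ rfl)
      exact (finrank_range_prod_inf_range_prod_le (hφ U hi.1).1 f g).trans (hD f hi.2 g hj.2 hfg)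
    · refine (hlift U hi.1 f _).trans ?_
      rw [map_fst_range_prod, (hφ U' hj.1).2]
      exact hC₁ U hi.1 U' hj.1 hU
  · rw [linkageFamily_inl, linkageFamily_inr]
    exact hcross U hi.1 f S'
  · rw [linkageFamily_inr, linkageFamily_inl, inf_comm]
    exact hcross U' hj.1 g S
  · have hSS : S ≠ S' := fun h => hij (h ▸ rfl)
    rw [linkageFamily_inr, linkageFamily_inr, ← Submodule.map_inf J hJ,
      ← ((S ⊓ S').equivMapOfInjective J hJ).finrank_eq]
    exact hC₂ S hi S' hj hSS

end Linkage

theorem Aq_mul_pow_add_Aq_le_Aq {F : Type*} [Field F] [Fintype F] {v k δ m : ℕ} (hδ : 0 < δ)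
    (hδk : δ ≤ k) (hkm : k - δ ≤ m) (hmv : m + k ≤ v) :
    Aq F m (2 * δ) k * Fintype.card F ^ ((v - m) * (k - δ + 1)) +
      Aq F (v - m + k - δ) (2 * δ) k ≤ Aq F v (2 * δ) k := by
  obtain ⟨K, _, _, _, hK⟩ := exists_finiteField_extension_finrank_eq F (n := v - m) (by omega)
  obtain ⟨C₁, hC₁card, hC₁⟩ := exists_isCDCode_card_eq_Aq (F := F) m (2 * δ) k
  obtain ⟨C₂, hC₂card, hC₂⟩ :=
    exists_isCDCode_card_eq_Aq (F := F) (v - m + k - δ) (2 * δ) k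
  obtain ⟨ι, hι⟩ := finrank_le_iff_exists_linearMap.mp
    (show finrank F (Fin k → F) ≤ finrank F K by simp only [finrank_fin_fun, hK]; omega)
  obtain ⟨D, hDcard, hD⟩ := exists_rankDistanceCode ι hι (t := k - δ + 1)
    (by simp only [finrank_fin_fun]; omega)
  obtain ⟨φ, hφ⟩ :=
    exists_parametrization_of_finrank_eq (F := F) (Fin k → F) (M := Fin m → F)
  obtain ⟨J, hJ, hJc⟩ := exists_injective_finrank_map_fst_range_le (F := F) (M := Fin m → F)
    (N := K) (w := v - m + k - δ) (c := k - δ) (by rw [finrank_fin_fun]; omega)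
    (by rw [hK]; omega)
  let eV : ((Fin m → F) × K) ≃ₗ[F] (Fin v → F) :=
    LinearEquiv.ofFinrankEq _ _ (by simp only [finrank_fin_fun, finrank_prod, hK]; omega)
  have hcard : Aq F m (2 * δ) k * Fintype.card F ^ ((v - m) * (k - δ + 1)) +
      Aq F (v - m + k - δ) (2 * δ) k = ((C₁ ×ˢ D).disjSum C₂).card := by
    rw [Finset.card_disjSum, Finset.card_product, hC₁card, hDcard, hC₂card,
      Module.card_eq_pow_finrank (K := F) (V := K), hK, pow_mul]
  have hφC₁ (U) (hU : U ∈ C₁) : Function.Injective (φ U) ∧ range (φ U) = U :=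
    hφ U ((hC₁.1 U hU).trans (by simp))
  rw [hcard]
  exact card_le_Aq_of_finrank_inf_le eV hδ hδk
    (finrank_linkageFamily (by simp) (fun U hU => (hφC₁ U hU).1) hJ hC₂.1)
    (finrank_linkageFamily_inf_le hφC₁ hJ hJc (hC₁.finrank_inf_le hδk) hD
      (hC₂.finrank_inf_le hδk))

/-- the improved linkage construction:
`A_q(v,d;k) ≥ A_q(m,d;k) * q^{(v-m)(k-d/2+1)} + A_q(v-m+k-d/2, d; k)`. -/
theorem stmt_13 (q : ℕ) (F : Type) [Field F] [Fintype F] (hq : Fintype.card F = q)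
    (v k d m : ℕ) (hdeven : 2 ∣ d) (hd2 : 2 ≤ d) (hdk : d ≤ 2 * k)
    (hkm : k ≤ m) (hmv : m + k ≤ v) :
    Aq F m d k * q ^ ((v - m) * (k - d / 2 + 1)) + Aq F (v - m + k - d / 2) d k ≤
      Aq F v d k := by
  subst hq
  obtain ⟨δ, rfl⟩ := hdeven
  rw [Nat.mul_div_cancel_left δ two_pos]
  exact Aq_mul_pow_add_Aq_le_Aq (by omega) (by omega) (by omega) hmv
end
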